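/- arXiv:1406.4015 — 3 statements merged into one kernel-verified Lean document; each statement's English description precedes it below -/
import Mathlib

section
/- Hopf Argument: Let (X, d) be a metric space with a Borel probability measure μ and let f : X → X be a Borel measurable μ-preserving map. If p ∈ [1, ∞] and φ ∈ L^p(μ) is f-invariant (φ∘f = φ μ-a.e.), then φ is W^ss-saturated; that is, there is a Borel set G ⊆ X with μ(G) = 1 such that for all x, y ∈ G with y ∈ W^ss(x) one has φ(x) = φ(y). -/
open MeasureTheory Filter Topology
open scoped ENNReal

/-- The strong stable set of `x` under `f`. -/
def Wss {X : Type*} [MetricSpace X] (f : X → X) (x : X) : Set X :=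
  {y | Tendsto (fun n : ℕ => dist (f^[n] x) (f^[n] y)) atTop (nhds 0)}

/-- `φ` is saturated with respect to the partition `W`: there is a Borel set `G` of full
measure such that `φ` is constant on the pieces `W x` within `G`. -/
def Saturated {X : Type*} [MeasurableSpace X] (μ : Measure X)
    (W : X → Set X) (φ : X → ℝ) : Prop :=
  ∃ G : Set X, MeasurableSet G ∧ μ G = 1 ∧
    ∀ x ∈ G, ∀ y ∈ G, y ∈ W x → φ x = φ y

/-!
Since `μ` is finite, `φ ∈ L¹`; approximate it in `L¹` by uniformly continuous `χ_j` with
`‖φ - χ_j‖₁ ≤ 4⁻ʲ`. The maximal ergodic inequality bounds the measure of the set where some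
Birkhoff average of `|φ - χ_j|` exceeds `2⁻ʲ` by `2⁻ʲ`, so by Borel–Cantelli almost every `x`
lies in only finitely many of these sets. For such `x`, invariance makes `φ` constant along the
orbit, so `φ x` is `2⁻ʲ`-close to every Birkhoff average of `χ_j` at `x`. If `y ∈ W^ss(x)` is
another such point, uniform continuity of `χ_j` and Cesàro summation make the Birkhoff
averages of `χ_j` at `x` and `y` asymptotically equal, whence `|φ x - φ y| ≤ 2 ⋅ 2⁻ʲ` for all
large `j`.
-/

open Metric
open scoped NNReal Uniformity

section BirkhoffAverage

variable {α E : Type*} {f : α → α}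

lemma birkhoffAverage_eq_of_forall_iterate_eq (R : Type*) [DivisionSemiring R] [CharZero R]
    [AddCommMonoid E] [Module R E] {φ : α → E} {x : α} (h : ∀ k, φ (f^[k] x) = φ x) {n : ℕ}
    (hn : n ≠ 0) :
    birkhoffAverage R f φ n x = φ x := by
  simp [birkhoffAverage, birkhoffSum, h, ← Nat.cast_smul_eq_nsmul R, smul_smul, hn]

variable [SeminormedAddCommGroup E] [NormedSpace ℝ E]

lemma norm_birkhoffAverage_le (f : α → α) (φ : α → E) (n : ℕ) (x : α) :
    ‖birkhoffAverage ℝ f φ n x‖ ≤ birkhoffAverage ℝ f (‖φ ·‖) n x := by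
  simp only [birkhoffAverage, birkhoffSum, norm_smul, norm_inv, Real.norm_natCast, smul_eq_mul]
  gcongr
  exact norm_sum_le _ _

end BirkhoffAverage

lemma MeasureTheory.Measure.QuasiMeasurePreserving.ae_forall_iterate_eq {α β : Type*}
    [MeasurableSpace α] {μ : Measure α} {f : α → α} (hf : QuasiMeasurePreserving f μ μ)
    {φ : α → β} (h : φ ∘ f =ᵐ[μ] φ) : ∀ᵐ x ∂μ, ∀ n, φ (f^[n] x) = φ x := by
  refine ae_all_iff.2 fun n ↦ ?_
  induction n with
  | zero => exact Eventually.of_forall fun _ ↦ rfl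
  | succ n ih =>
    filter_upwards [ih, (hf.iterate n).ae h] with x hx hfx
    rwa [Function.iterate_succ_apply', ← hx]

section MaximalErgodic

variable {α : Type*} {f : α → α} {g : α → ℝ}

def maxBirkhoffSum (f : α → α) (g : α → ℝ) (n : ℕ) : α → ℝ :=
  partialSups (birkhoffSum f g) n

lemma maxBirkhoffSum_apply (n : ℕ) (x : α) :
    maxBirkhoffSum f g n x = partialSups (birkhoffSum f g · x) n :=
  Pi.partialSups_apply _ _ _

lemma maxBirkhoffSum_nonneg (n : ℕ) (x : α) : 0 ≤ maxBirkhoffSum f g n x :=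
  le_partialSups_of_le (birkhoffSum f g) n.zero_le x

lemma maxBirkhoffSum_mono : Monotone (maxBirkhoffSum f g) :=
  partialSups_monotone _

lemma maxBirkhoffSum_add_one (n : ℕ) (x : α) :
    maxBirkhoffSum f g (n + 1) x = max 0 (g x + maxBirkhoffSum f g n (f x)) := by
  simp only [maxBirkhoffSum_apply, partialSups_add_one', Function.comp_def, birkhoffSum_succ']
  rw [← OrderIso.addLeft_apply (g x), ← map_partialSups]
  simp [birkhoffSum_zero]

lemma pos_maxBirkhoffSum_iff {n : ℕ} {x : α} :
    0 < maxBirkhoffSum f g n x ↔ ∃ k ≤ n, 0 < birkhoffSum f g k x := by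
  simp [maxBirkhoffSum_apply, partialSups_apply, Finset.lt_sup'_iff]

lemma maxBirkhoffSum_sub_comp_le {n : ℕ} {x : α} (hx : 0 < maxBirkhoffSum f g n x) :
    maxBirkhoffSum f g n x - maxBirkhoffSum f g n (f x) ≤ g x := by
  rcases le_max_iff.1 ((maxBirkhoffSum_mono n.le_succ x).trans_eq (maxBirkhoffSum_add_one n x))
    with h | h
  · exact absurd hx h.not_gt
  · linarith

lemma lt_birkhoffAverage_iff {c : ℝ} (hc : 0 ≤ c) {n : ℕ} {x : α} :
    c < birkhoffAverage ℝ f g n x ↔ 0 < birkhoffSum f (g - fun _ ↦ c) n x := by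
  have hconst : birkhoffSum f (fun _ ↦ c) n x = n * c := by simp [birkhoffSum]
  rw [birkhoffSum_sub, hconst, sub_pos, birkhoffAverage, smul_eq_mul]
  rcases n.eq_zero_or_pos with rfl | hn
  · simp [hc.not_gt]
  · rw [lt_inv_mul_iff₀ (by positivity), mul_comm]

variable [MeasurableSpace α] {μ : Measure α}

lemma measurable_birkhoffSum (hf : Measurable f) (hg : Measurable g) (n : ℕ) :
    Measurable (birkhoffSum f g n) :=
  Finset.measurable_sum _ fun k _ ↦ hg.comp (hf.iterate k)

lemma integrable_birkhoffSum (hf : MeasurePreserving f μ μ) (hg : Integrable g μ) (n : ℕ) :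
    Integrable (birkhoffSum f g n) μ :=
  integrable_finsetSum _ fun k _ ↦ (hf.iterate k).integrable_comp_of_integrable hg

lemma measurable_maxBirkhoffSum (hf : Measurable f) (hg : Measurable g) (n : ℕ) :
    Measurable (maxBirkhoffSum f g n) := by
  induction n with
  | zero => exact measurable_birkhoffSum hf hg 0
  | succ n ih =>
    rw [maxBirkhoffSum, partialSups_add_one]
    exact ih.sup (measurable_birkhoffSum hf hg _)

lemma integrable_maxBirkhoffSum (hf : MeasurePreserving f μ μ) (hg : Integrable g μ) (n : ℕ) :
    Integrable (maxBirkhoffSum f g n) μ := by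
  induction n with
  | zero => exact integrable_birkhoffSum hf hg 0
  | succ n ih =>
    rw [maxBirkhoffSum, partialSups_add_one]
    exact ih.sup (integrable_birkhoffSum hf hg _)

theorem setIntegral_pos_maxBirkhoffSum_nonneg (hf : MeasurePreserving f μ μ) (hgm : Measurable g)
    (hg : Integrable g μ) (n : ℕ) :
    0 ≤ ∫ x in {x | 0 < maxBirkhoffSum f g n x}, g x ∂μ := by
  set M := maxBirkhoffSum f g n
  set E := {x | 0 < M x}
  have hMm : Measurable M := measurable_maxBirkhoffSum hf.measurable hgm n
  have hM : Integrable M μ := integrable_maxBirkhoffSum hf hg n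
  have hMf : Integrable (M ∘ f) μ := hf.integrable_comp_of_integrable hM
  have hM_E : ∫ x in E, M x ∂μ = ∫ x, M x ∂μ :=
    setIntegral_eq_integral_of_forall_compl_eq_zero fun x hx ↦
      le_antisymm (not_lt.1 hx) (maxBirkhoffSum_nonneg n x)
  have hMf_E : ∫ x in E, M (f x) ∂μ ≤ ∫ x, M (f x) ∂μ :=
    setIntegral_le_integral hMf (Eventually.of_forall fun x ↦ maxBirkhoffSum_nonneg n _)
  have hMf_eq : ∫ x, M (f x) ∂μ = ∫ x, M x ∂μ := by
    rw [← integral_map hf.aemeasurable hMm.aestronglyMeasurable, hf.map_eq]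
  calc 0 ≤ ∫ x in E, M x ∂μ - ∫ x in E, M (f x) ∂μ := by linarith
    _ = ∫ x in E, (M x - M (f x)) ∂μ := (integral_sub hM.integrableOn hMf.integrableOn).symm
    _ ≤ ∫ x in E, g x ∂μ :=
      setIntegral_mono_on (hM.sub hMf).integrableOn hg.integrableOn
        (measurableSet_lt measurable_const hMm) fun _ ↦ maxBirkhoffSum_sub_comp_le

theorem mul_measure_exists_lt_birkhoffAverage_le [IsFiniteMeasure μ] (hf : MeasurePreserving f μ μ)
    (hgm : Measurable g) (hg : Integrable g μ) (c : ℝ≥0) :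
    c * μ {x | ∃ n, (c : ℝ) < birkhoffAverage ℝ f g n x} ≤ ∫⁻ x, ‖g x‖ₑ ∂μ := by
  set h := g - fun _ ↦ (c : ℝ)
  have hhm : Measurable h := hgm.sub measurable_const
  have hhi : Integrable h μ := hg.sub (integrable_const _)
  set E := fun N ↦ {x | 0 < maxBirkhoffSum f h N x}
  have hE : {x | ∃ n, (c : ℝ) < birkhoffAverage ℝ f g n x} = ⋃ N, E N := by
    ext x
    simp only [Set.mem_ofPred_eq, Set.mem_iUnion, E, pos_maxBirkhoffSum_iff,
      lt_birkhoffAverage_iff c.coe_nonneg]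
    exact ⟨fun ⟨n, hn⟩ ↦ ⟨n, n, le_rfl, hn⟩, fun ⟨_, n, _, hn⟩ ↦ ⟨n, hn⟩⟩
  have hEmono : Monotone E := fun M N hMN x hx ↦ hx.out.trans_le (maxBirkhoffSum_mono hMN x)
  have hEN : ∀ N, c * μ (E N) ≤ ∫⁻ x, ‖g x‖ₑ ∂μ := fun N ↦ by
    have garsia : 0 ≤ ∫ x in E N, (g x - c) ∂μ :=
      setIntegral_pos_maxBirkhoffSum_nonneg hf hhm hhi N
    rw [integral_sub hg.integrableOn (integrable_const _), setIntegral_const, smul_eq_mul] at garsia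
    have hreal : c * μ.real (E N) ≤ ∫ x, ‖g x‖ ∂μ := calc
      c * μ.real (E N) ≤ ∫ x in E N, g x ∂μ := by linarith
      _ ≤ ∫ x in E N, ‖g x‖ ∂μ := setIntegral_mono hg.integrableOn hg.norm.integrableOn
          fun x ↦ le_abs_self _
      _ ≤ ∫ x, ‖g x‖ ∂μ :=
          setIntegral_le_integral hg.norm (Eventually.of_forall fun _ ↦ norm_nonneg _)
    rw [← ofReal_integral_norm_eq_lintegral_enorm hg, ← ofReal_measureReal (measure_ne_top μ _),
      ← ENNReal.ofReal_coe_nnreal, ← ENNReal.ofReal_mul c.coe_nonneg]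
    exact ENNReal.ofReal_le_ofReal hreal
  rw [hE, hEmono.measure_iUnion, ENNReal.mul_iSup]
  exact iSup_le hEN

theorem ae_eventually_forall_birkhoffAverage_le [IsFiniteMeasure μ] (hf : MeasurePreserving f μ μ)
    {g : ℕ → α → ℝ} (hgm : ∀ j, Measurable (g j)) {c : ℕ → ℝ≥0} (hc₀ : ∀ j, c j ≠ 0)
    (hgc : ∀ j, ∫⁻ x, ‖g j x‖ₑ ∂μ ≤ c j ^ 2) (hc : ∑' j, (c j : ℝ≥0∞) ≠ ∞) :
    ∀ᵐ x ∂μ, ∀ᶠ j in atTop, ∀ n, birkhoffAverage ℝ f (g j) n x ≤ c j := by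
  have hbad : ∀ j, μ {x | ∃ n, (c j : ℝ) < birkhoffAverage ℝ f (g j) n x} ≤ c j := fun j ↦ by
    have hgi : Integrable (g j) μ := ⟨(hgm j).aestronglyMeasurable, (hgc j).trans_lt (by simp)⟩
    refine (ENNReal.mul_le_mul_iff_right (by simpa using hc₀ j) ENNReal.coe_ne_top).1 ?_
    rw [← sq]
    exact (mul_measure_exists_lt_birkhoffAverage_le hf (hgm j) hgi (c j)).trans (hgc j)
  filter_upwards [ae_eventually_notMem (ne_top_of_le_ne_top hc (ENNReal.tsum_le_tsum hbad))]
    with x hx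
  exact hx.mono fun j hj n ↦ not_lt.1 fun h ↦ hj ⟨n, h⟩

end MaximalErgodic

section UniformContinuousDense

variable {X E : Type*} [PseudoMetricSpace X] [NormedAddCommGroup E] [NormedSpace ℝ E]

lemma norm_thickenedIndicator_smul_sub_indicator_le {δ : ℝ} (hδ : 0 < δ) {F s : Set X}
    (hFs : F ⊆ s) (c : E) (x : X) :
    ‖(thickenedIndicator hδ F x : ℝ) • c - s.indicator (fun _ ↦ c) x‖ ≤
      ‖(thickening δ F \ F ∪ s \ F).indicator (fun _ ↦ c) x‖ := by
  set t : ℝ := (thickenedIndicator hδ F x : ℝ)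
  have ht₀ : 0 ≤ t := NNReal.coe_nonneg _
  have ht₁ : t ≤ 1 := NNReal.coe_le_one.2 (thickenedIndicator_le_one hδ F x)
  by_cases hxF : x ∈ F
  · have : t = 1 := congrArg NNReal.toReal (thickenedIndicator_one hδ F hxF)
    simp [this, hFs hxF]
  by_cases hx : x ∈ thickening δ F \ F ∪ s \ F
  · rw [Set.indicator_of_mem hx]
    by_cases hxs : x ∈ s
    · rw [Set.indicator_of_mem hxs, show t • c - c = (t - 1) • c by rw [sub_smul, one_smul],
        norm_smul, Real.norm_eq_abs, abs_of_nonpos (by linarith)]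
      exact mul_le_of_le_one_left (norm_nonneg c) (by linarith)
    · rw [Set.indicator_of_notMem hxs, sub_zero, norm_smul, Real.norm_eq_abs, abs_of_nonneg ht₀]
      exact mul_le_of_le_one_left (norm_nonneg c) ht₁
  · have hxs : x ∉ s := fun hxs ↦ hx (Or.inr ⟨hxs, hxF⟩)
    have hxt : x ∉ thickening δ F := fun hxt ↦ hx (Or.inl ⟨hxt, hxF⟩)
    have : t = 0 := congrArg NNReal.toReal (thickenedIndicator_zero hδ F hxt)
    simp [this, hxs]

variable [MeasurableSpace X] [BorelSpace X] {μ : Measure X} [IsFiniteMeasure μ] {p : ℝ≥0∞}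

lemma exists_uniformContinuous_eLpNorm_sub_indicator_le (hp : p ≠ ∞) {s : Set X}
    (hs : MeasurableSet s) (c : E) {ε : ℝ≥0∞} (hε : ε ≠ 0) :
    ∃ g : X → E, UniformContinuous g ∧ AEStronglyMeasurable g μ ∧
      eLpNorm (g - s.indicator fun _ ↦ c) p μ ≤ ε := by
  obtain ⟨η, hη₀, hη⟩ := exists_eLpNorm_indicator_le (μ := μ) hp c hε
  have hη₂ : (η / 2 : ℝ≥0∞) ≠ 0 := by simpa using hη₀.ne'
  obtain ⟨F, hFs, hF, hsF⟩ := hs.exists_isClosed_sdiff_lt (measure_ne_top μ s) hη₂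
  obtain ⟨δ, hδF, hδ⟩ : ∃ δ, μ (thickening δ F) < μ F + η / 2 ∧ 0 < δ :=
    ((tendsto_measure_thickening_of_isClosed ⟨1, one_pos, measure_ne_top μ _⟩ hF)
      |>.eventually_lt_const (ENNReal.lt_add_right (measure_ne_top μ F) hη₂)).and
      self_mem_nhdsWithin |>.exists
  have hthF : μ (thickening δ F \ F) < η / 2 :=
    measure_sdiff_lt_of_lt_add hF.measurableSet.nullMeasurableSet (self_subset_thickening hδ F)
      (measure_ne_top μ F) hδF
  set t : X → ℝ := fun x ↦ thickenedIndicator hδ F x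
  have ht : UniformContinuous t :=
    uniformContinuous_subtype_val.comp (lipschitzWith_thickenedIndicator hδ F).uniformContinuous
  refine ⟨fun x ↦ t x • c, (ContinuousLinearMap.toSpanSingleton ℝ c).uniformContinuous.comp ht,
    (ht.continuous.aestronglyMeasurable).smul_const c, (eLpNorm_mono fun x ↦ ?_).trans
    (hη _ ((measure_union_le (thickening δ F \ F) (s \ F)).trans ?_))⟩
  · exact norm_thickenedIndicator_smul_sub_indicator_le hδ hFs c x
  · calc _ ≤ (η / 2 : ℝ≥0∞) + η / 2 := add_le_add hthF.le hsF.le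
      _ = η := ENNReal.add_halves _

theorem MeasureTheory.MemLp.exists_uniformContinuous_eLpNorm_sub_le (hp : p ≠ ∞) {φ : X → E}
    (hφ : MemLp φ p μ) {ε : ℝ≥0∞} (hε : ε ≠ 0) :
    ∃ χ : X → E, UniformContinuous χ ∧ eLpNorm (φ - χ) p μ ≤ ε := by
  obtain ⟨χ, hφχ, hχ, -⟩ := hφ.induction_dense hp
    (fun χ ↦ UniformContinuous χ ∧ AEStronglyMeasurable χ μ)
    (fun c _ hs _ _ hε ↦ (exists_uniformContinuous_eLpNorm_sub_indicator_le hp hs c hε).imp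
      fun _ ⟨hu, hm, hle⟩ ↦ ⟨hle, hu, hm⟩)
    (fun _ _ hf hg ↦ ⟨hf.1.add hg.1, hf.2.add hg.2⟩) (fun _ h ↦ h.2) hε
  exact ⟨χ, hχ, hφχ⟩

end UniformContinuousDense

section StableSet

variable {X E : Type*} [MetricSpace X] [NormedAddCommGroup E] [NormedSpace ℝ E] {f : X → X}
  {x y : X}

lemma tendsto_birkhoffAverage_sub_of_mem_Wss {χ : X → E} (hχ : UniformContinuous χ)
    (hxy : y ∈ Wss f x) :
    Tendsto (fun n ↦ birkhoffAverage ℝ f χ n x - birkhoffAverage ℝ f χ n y) atTop (𝓝 0) := by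
  have horbit : Tendsto (fun k ↦ (f^[k] x, f^[k] y)) atTop (𝓤 X) :=
    tendsto_uniformity_iff_dist_tendsto_zero.2 hxy
  have hχorbit : Tendsto (fun k ↦ χ (f^[k] x) - χ (f^[k] y)) atTop (𝓝 0) := by
    simpa [dist_eq_norm, tendsto_zero_iff_norm_tendsto_zero] using
      tendsto_uniformity_iff_dist_tendsto_zero.1 (Tendsto.comp hχ horbit)
  refine hχorbit.cesaro_smul.congr fun n ↦ ?_
  simp [birkhoffAverage, birkhoffSum, smul_sub, Finset.sum_sub_distrib]

lemma norm_sub_le_of_mem_Wss {φ χ : X → E} (hχ : UniformContinuous χ) (hxy : y ∈ Wss f x)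
    (hφx : ∀ n, φ (f^[n] x) = φ x) (hφy : ∀ n, φ (f^[n] y) = φ y) {ε : ℝ}
    (hx : ∀ n, birkhoffAverage ℝ f (fun z ↦ ‖φ z - χ z‖) n x ≤ ε)
    (hy : ∀ n, birkhoffAverage ℝ f (fun z ↦ ‖φ z - χ z‖) n y ≤ ε) :
    ‖φ x - φ y‖ ≤ 2 * ε := by
  set A : (X → E) → ℕ → X → E := birkhoffAverage ℝ f
  have hn : ∀ n, 0 < n → ‖φ x - φ y‖ ≤ 2 * ε + ‖A χ n x - A χ n y‖ := fun n hn ↦ by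
    rw [← birkhoffAverage_eq_of_forall_iterate_eq ℝ hφx hn.ne',
      ← birkhoffAverage_eq_of_forall_iterate_eq ℝ hφy hn.ne']
    calc ‖A φ n x - A φ n y‖ = ‖A (φ - χ) n x + (A χ n x - A χ n y) - A (φ - χ) n y‖ := by
          simp only [A, birkhoffAverage_sub, Pi.sub_apply]; abel_nf
      _ ≤ ‖A (φ - χ) n x‖ + ‖A χ n x - A χ n y‖ + ‖A (φ - χ) n y‖ :=
          norm_sub_le_of_le (norm_add_le _ _) le_rfl
      _ ≤ ε + ‖A χ n x - A χ n y‖ + ε := by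
          gcongr
          · exact (norm_birkhoffAverage_le f _ n x).trans (hx n)
          · exact (norm_birkhoffAverage_le f _ n y).trans (hy n)
      _ = 2 * ε + ‖A χ n x - A χ n y‖ := by ring
  have hlim := ((tendsto_birkhoffAverage_sub_of_mem_Wss hχ hxy).norm.const_add (2 * ε))
  rw [norm_zero, add_zero] at hlim
  exact ge_of_tendsto hlim ((eventually_gt_atTop 0).mono hn)

end StableSet

lemma saturated_of_ae {X : Type*} [MeasurableSpace X] {μ : Measure X} [IsProbabilityMeasure μ]
    {W : X → Set X} {φ : X → ℝ} {P : X → Prop} (hP : ∀ᵐ x ∂μ, P x)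
    (hW : ∀ x y, P x → P y → y ∈ W x → φ x = φ y) : Saturated μ W φ := by
  have hP_of_mem : ∀ x ∈ (toMeasurable μ {x | ¬P x})ᶜ, P x := fun x hx ↦
    not_not.1 fun h ↦ hx (subset_toMeasurable _ _ h)
  refine ⟨_, (measurableSet_toMeasurable _ _).compl, ?_, fun x hx y hy ↦
    hW x y (hP_of_mem x hx) (hP_of_mem y hy)⟩
  rw [prob_compl_eq_one_iff (measurableSet_toMeasurable _ _), measure_toMeasurable]
  exact ae_iff.1 hP

/-- **Hopf argument**: any `f`-invariant `φ ∈ L^p(μ)` is `W^ss`-saturated. -/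
theorem hopf_argument {X : Type*} [MetricSpace X] [MeasurableSpace X] [BorelSpace X]
    (μ : Measure X) [IsProbabilityMeasure μ]
    (f : X → X) (hf : MeasurePreserving f μ μ)
    (p : ℝ≥0∞) (hp : 1 ≤ p)
    (φ : X → ℝ) (hφm : Measurable φ) (hφp : MemLp φ p μ)
    (hinv : φ ∘ f =ᵐ[μ] φ) :
    Saturated μ (Wss f) φ := by
  set c : ℕ → ℝ≥0 := fun j ↦ 2⁻¹ ^ j
  have hc₀ : ∀ j, c j ≠ 0 := fun j ↦ by simp [c]
  have hc : ∑' j, (c j : ℝ≥0∞) ≠ ∞ := by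
    simp only [c, ENNReal.coe_pow, ENNReal.coe_inv two_ne_zero, ENNReal.coe_ofNat,
      ENNReal.tsum_geometric, ENNReal.one_sub_inv_two, inv_inv]
    exact ENNReal.ofNat_ne_top
  choose χ hχ hφχ using fun j ↦ (hφp.mono_exponent hp).exists_uniformContinuous_eLpNorm_sub_le
    ENNReal.one_ne_top (ε := (c j ^ 2 : ℝ≥0)) (by simp [hc₀ j])
  set g : ℕ → X → ℝ := fun j x ↦ ‖φ x - χ j x‖
  have hgm : ∀ j, Measurable (g j) := fun j ↦ (hφm.sub (hχ j).continuous.measurable).norm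
  have hgc : ∀ j, ∫⁻ x, ‖g j x‖ₑ ∂μ ≤ c j ^ 2 := fun j ↦ by
    simpa [g, eLpNorm_one_eq_lintegral_enorm] using hφχ j
  refine saturated_of_ae ((ae_eventually_forall_birkhoffAverage_le hf hgm hc₀ hgc hc).and
    (hf.quasiMeasurePreserving.ae_forall_iterate_eq hinv)) ?_
  rintro x y ⟨hx, hφx⟩ ⟨hy, hφy⟩ hxy
  have hle : ∀ᶠ j in atTop, ‖φ x - φ y‖ ≤ 2 * c j := (hx.and hy).mono fun j hj ↦
    norm_sub_le_of_mem_Wss (hχ j) hxy hφx hφy hj.1 hj.2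
  have hlim : Tendsto (fun j ↦ 2 * (c j : ℝ)) atTop (𝓝 0) := by
    simpa [c] using (tendsto_pow_atTop_nhds_zero_of_lt_one (r := (2⁻¹ : ℝ)) (by norm_num)
      (by norm_num)).const_mul 2
  exact sub_eq_zero.1 (norm_le_zero_iff.1 (ge_of_tendsto hlim hle))
end

section
/- Let (X, d) be a metric space with a Borel probability measure μ and let f : X → X be an invertible Borel measurable μ-preserving map whose inverse is also Borel measurable and μ-preserving. Then every f-invariant φ ∈ L²(μ) (i.e. φ∘f = φ μ-a.e.) is both W^ss-saturated and W^su-saturated. -/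
open MeasureTheory Filter Topology
open scoped ENNReal

/-! Hopf argument. For uniformly continuous `ψ`, the Birkhoff averages of `ψ` at `x` and at
`y ∈ W^ss(x)` are asymptotically equal. By von Neumann's mean ergodic theorem they converge in
`L²` to the projection `Pψ` of `ψ` onto the `f`-invariant functions, so along a subsequence they
converge a.e. and `Pψ` is saturated off a null set. Lipschitz functions are dense in `L²` and `P`
is continuous and fixes `φ`, so `φ` is an `L²`-limit of saturated functions, hence saturated by
the same subsequence argument. The unstable case is the stable case for `f⁻¹`. -/

open Set Metric Uniformity
open scoped NNReal

def AESaturated {X β : Type*} [MeasurableSpace X] (μ : Measure X) (W : X → Set X)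
    (φ : X → β) : Prop :=
  ∃ S ∈ ae μ, ∀ x ∈ S, ∀ y ∈ S, y ∈ W x → φ x = φ y

section Saturation

variable {X β : Type*} [MeasurableSpace X] {μ : Measure X} {W : X → Set X}

theorem AESaturated.saturated [IsProbabilityMeasure μ] {φ : X → ℝ} (h : AESaturated μ W φ) :
    Saturated μ W φ := by
  obtain ⟨S, hS, hφ⟩ := h
  have hsub : (toMeasurable μ Sᶜ)ᶜ ⊆ S := compl_subset_comm.1 (subset_toMeasurable μ Sᶜ)
  refine ⟨(toMeasurable μ Sᶜ)ᶜ, (measurableSet_toMeasurable μ _).compl, ?_,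
    fun x hx y hy => hφ x (hsub hx) y (hsub hy)⟩
  rw [prob_compl_eq_one_iff (measurableSet_toMeasurable μ _), measure_toMeasurable]
  exact hS

theorem AESaturated.of_tendstoInMeasure_of_tendsto_dist [MetricSpace β] {g : ℕ → X → β} {φ : X → β}
    (hlim : TendstoInMeasure μ g atTop φ)
    (hg : ∃ S ∈ ae μ, ∀ x ∈ S, ∀ y ∈ S, y ∈ W x →
      Tendsto (fun n => dist (g n x) (g n y)) atTop (𝓝 0)) :
    AESaturated μ W φ := by
  obtain ⟨ns, hns, hae⟩ := hlim.exists_seq_tendsto_ae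
  obtain ⟨S, hS, hgS⟩ := hg
  refine ⟨S ∩ {x | Tendsto (fun i => g (ns i) x) atTop (𝓝 (φ x))}, inter_mem hS hae, ?_⟩
  rintro x ⟨hxS, hx⟩ y ⟨hyS, hy⟩ hxy
  exact dist_eq_zero.1 <| tendsto_nhds_unique (hx.dist hy)
    ((hgS x hxS y hyS hxy).comp hns.tendsto_atTop)

theorem AESaturated.of_tendstoInMeasure [MetricSpace β] {g : ℕ → X → β} {φ : X → β}
    (hlim : TendstoInMeasure μ g atTop φ) (hg : ∀ n, AESaturated μ W (g n)) :
    AESaturated μ W φ := by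
  choose S hS hgS using hg
  refine AESaturated.of_tendstoInMeasure_of_tendsto_dist hlim
    ⟨⋂ n, S n, countable_iInter_mem.2 hS, ?_⟩
  intro x hx y hy hxy
  simp only [mem_iInter] at hx hy
  simp [hgS _ x (hx _) y (hy _) hxy]

end Saturation

theorem tendsto_dist_birkhoffAverage_of_mem_Wss {X E : Type*} [MetricSpace X]
    [NormedAddCommGroup E] [NormedSpace ℝ E] {f : X → X} {ψ : X → E} (hψ : UniformContinuous ψ)
    {x y : X} (hy : y ∈ Wss f x) :
    Tendsto (fun n => dist (birkhoffAverage ℝ f ψ n x) (birkhoffAverage ℝ f ψ n y)) atTop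
      (𝓝 0) := by
  have horbit : Tendsto (fun k => (f^[k] x, f^[k] y)) atTop (𝓤 X) :=
    tendsto_uniformity_iff_dist_tendsto_zero.2 (by exact hy)
  have hterm : Tendsto (fun k => dist (ψ (f^[k] x)) (ψ (f^[k] y))) atTop (𝓝 0) :=
    tendsto_uniformity_iff_dist_tendsto_zero.1 (Tendsto.comp hψ horbit)
  refine squeeze_zero (fun n => dist_nonneg) (fun n => ?_) hterm.cesaro
  exact (dist_birkhoffAverage_birkhoffAverage_le ℝ f ψ n x y).trans_eq (div_eq_inv_mul _ _)

section LipschitzDense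

variable {X E : Type*} [PseudoMetricSpace X] [MeasurableSpace X] [BorelSpace X]
  [NormedAddCommGroup E] [NormedSpace ℝ E]
  {μ : Measure X} [IsFiniteMeasure μ] {p : ℝ≥0∞}

theorem exists_lipschitzWith_eLpNorm_sub_indicator_le (hp : p ≠ ∞) (c : E) {s : Set X}
    (hs : MeasurableSet s) {ε : ℝ≥0∞} (hε : ε ≠ 0) :
    ∃ g : X → E, eLpNorm (g - s.indicator fun _ => c) p μ ≤ ε ∧ ∃ K, LipschitzWith K g := by
  obtain ⟨η, hη, hηε⟩ := exists_eLpNorm_indicator_le (μ := μ) hp c hε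
  have hη2 : (η / 2 : ℝ≥0∞) ≠ 0 := by simp [hη.ne']
  obtain ⟨F, hFs, hF, hsF⟩ := hs.exists_isClosed_sdiff_lt (measure_ne_top μ s) hη2
  obtain ⟨δ, hTF, hδ⟩ : ∃ δ : ℝ, μ (thickening δ F) < μ F + η / 2 ∧ 0 < δ :=
    (((tendsto_measure_thickening_of_isClosed ⟨1, one_pos, measure_ne_top μ _⟩ hF
      ).eventually_lt_const (ENNReal.lt_add_right (measure_ne_top μ F) hη2)).and
      self_mem_nhdsWithin).exists
  set B := (s \ F) ∪ (thickening δ F \ F)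
  have hB : μ B ≤ η := calc
    μ B ≤ μ (s \ F) + μ (thickening δ F \ F) := measure_union_le _ _
    _ ≤ η / 2 + η / 2 := add_le_add hsF.le (measure_sdiff_lt_of_lt_add hF.nullMeasurableSet
        (self_subset_thickening hδ F) (measure_ne_top μ F) hTF).le
    _ = η := ENNReal.add_halves _
  -- `t` is `1` on `F` and `0` off the `δ`-thickening, so `t • c` differs from `s.indicator c`
  -- only on `B`, and there by at most `‖c‖`.
  set t := thickenedIndicator hδ F
  refine ⟨fun x => (t x : ℝ) • c, (eLpNorm_mono fun x => ?_).trans (hηε B hB), _,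
    (ContinuousLinearMap.toSpanSingleton ℝ c).lipschitz.comp
      (isometry_subtype_coe.lipschitz.comp (lipschitzWith_thickenedIndicator hδ F))⟩
  have ht0 : 0 ≤ (t x : ℝ) := (t x).2
  have ht1 : (t x : ℝ) ≤ 1 := thickenedIndicator_le_one hδ F x
  rw [Pi.sub_apply]
  by_cases hxF : x ∈ F
  · have htx : t x = 1 := thickenedIndicator_one hδ F hxF
    simp [htx, hFs hxF]
  by_cases hxT : x ∈ thickening δ F
  · have hxB : x ∈ B := Or.inr ⟨hxT, hxF⟩
    rw [indicator_of_mem hxB]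
    by_cases hxs : x ∈ s
    · rw [indicator_of_mem hxs, show (t x : ℝ) • c - c = ((t x : ℝ) - 1) • c by
        rw [sub_smul, one_smul], norm_smul, Real.norm_eq_abs,
        abs_of_nonpos (sub_nonpos.2 ht1)]
      exact mul_le_of_le_one_left (norm_nonneg c) (by linarith)
    · rw [indicator_of_notMem hxs, sub_zero, norm_smul, Real.norm_eq_abs, abs_of_nonneg ht0]
      exact mul_le_of_le_one_left (norm_nonneg c) ht1
  · have htx : t x = 0 := thickenedIndicator_zero hδ F hxT
    by_cases hxs : x ∈ s
    · simp [htx, hxs, B, hxF]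
    · simp [htx, hxs]

theorem MeasureTheory.MemLp.exists_lipschitzWith_eLpNorm_sub_le
    [SecondCountableTopologyEither X E] (hp : p ≠ ∞) {φ : X → E} (hφ : MemLp φ p μ)
    {ε : ℝ≥0∞} (hε : ε ≠ 0) : ∃ g : X → E, eLpNorm (φ - g) p μ ≤ ε ∧ ∃ K, LipschitzWith K g :=
  hφ.induction_dense hp _
    (fun c _ hs _ _ hε => exists_lipschitzWith_eLpNorm_sub_indicator_le hp c hs hε)
    (fun _ _ ⟨K, hf⟩ ⟨K', hg⟩ => ⟨K + K', hf.add hg⟩)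
    (fun _ ⟨_, hg⟩ => hg.continuous.aestronglyMeasurable) hε

theorem MeasureTheory.MemLp.exists_lipschitzWith_seq_tendsto_toLp
    [SecondCountableTopologyEither X E] [Fact (1 ≤ p)] (hp : p ≠ ∞) {φ : X → E}
    (hφ : MemLp φ p μ) :
    ∃ (ψ : ℕ → X → E) (hψ : ∀ k, MemLp (ψ k) p μ), (∀ k, ∃ K, LipschitzWith K (ψ k)) ∧
      Tendsto (fun k => (hψ k).toLp (ψ k)) atTop (𝓝 (hφ.toLp φ)) := by
  choose ψ hψφ hψ using fun k : ℕ =>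
    hφ.exists_lipschitzWith_eLpNorm_sub_le hp (ε := ((k + 1 : ℕ) : ℝ≥0∞)⁻¹) (by simp)
  have hmem : ∀ k, MemLp (ψ k) p μ := fun k => by
    have hdiff : MemLp (φ - ψ k) p μ :=
      ⟨hφ.aestronglyMeasurable.sub (hψ k).choose_spec.continuous.aestronglyMeasurable,
        (hψφ k).trans_lt (by simp)⟩
    simpa using hφ.sub hdiff
  refine ⟨ψ, hmem, hψ, (Lp.tendsto_Lp_iff_tendsto_eLpNorm'' _ hmem _ hφ).2 ?_⟩
  refine tendsto_of_tendsto_of_tendsto_of_le_of_le tendsto_const_nhds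
    (ENNReal.tendsto_inv_nat_nhds_zero.comp (tendsto_add_atTop_nat 1)) (fun _ => zero_le)
    fun k => ?_
  rw [eLpNorm_sub_comm]
  exact hψφ k

end LipschitzDense

section Koopman

variable {X E : Type*} [MeasurableSpace X] {μ : Measure X} {f : X → X}
  [NormedAddCommGroup E] {p : ℝ≥0∞}

theorem MeasureTheory.MemLp.birkhoffSum {ψ : X → E} (hψ : MemLp ψ p μ)
    (hf : MeasurePreserving f μ μ) (n : ℕ) : MemLp (birkhoffSum f ψ n) p μ :=
  memLp_finsetSum _ fun k _ => hψ.comp_measurePreserving (hf.iterate k)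

variable [NormedSpace ℝ E] [Fact (1 ≤ p)]

noncomputable def koopman (hf : MeasurePreserving f μ μ) : Lp E p μ →L[ℝ] Lp E p μ :=
  (Lp.compMeasurePreservingₗᵢ ℝ f hf).toContinuousLinearMap

theorem norm_koopman_le (hf : MeasurePreserving f μ μ) :
    ‖(koopman hf : Lp E p μ →L[ℝ] Lp E p μ)‖ ≤ 1 :=
  LinearIsometry.norm_toContinuousLinearMap_le _

theorem birkhoffSum_koopman_toLp (hf : MeasurePreserving f μ μ) {ψ : X → E} (hψ : MemLp ψ p μ)
    (n : ℕ) : birkhoffSum (koopman hf) id n (hψ.toLp ψ) = (hψ.birkhoffSum hf n).toLp _ := by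
  induction n with
  | zero => simp
  | succ n ih =>
    have hiter : (koopman (E := E) (p := p) hf)^[n] (hψ.toLp ψ) =
        (hψ.comp_measurePreserving (hf.iterate n)).toLp _ := by
      change (Lp.compMeasurePreserving f hf)^[n] _ = _
      rw [Lp.compMeasurePreserving_iterate]
      rfl
    rw [birkhoffSum_succ, ih, id, hiter, ← MemLp.toLp_add]
    exact MemLp.toLp_congr _ _ (.of_forall fun x => (birkhoffSum_succ f ψ n x).symm)

theorem coeFn_birkhoffAverage_koopman_toLp (hf : MeasurePreserving f μ μ) {ψ : X → E}
    (hψ : MemLp ψ p μ) (n : ℕ) :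
    ⇑(birkhoffAverage ℝ (koopman hf) id n (hψ.toLp ψ)) =ᵐ[μ] birkhoffAverage ℝ f ψ n := by
  have h : birkhoffAverage ℝ (koopman hf) id n (hψ.toLp ψ) =
      ((hψ.birkhoffSum hf n).const_smul (n : ℝ)⁻¹).toLp (birkhoffAverage ℝ f ψ n) := by
    rw [birkhoffAverage, birkhoffSum_koopman_toLp]
    rfl
  rw [h]
  exact MemLp.coeFn_toLp _

end Koopman

section Hopf

variable {X : Type*} [MeasurableSpace X] {μ : Measure X} {f : X → X}

noncomputable def invariantProjection (hf : MeasurePreserving f μ μ) :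
    Lp ℝ 2 μ →L[ℝ] Lp ℝ 2 μ :=
  ((koopman hf).eqLocus (1 : Lp ℝ 2 μ →L[ℝ] Lp ℝ 2 μ)).starProjection

theorem tendsto_birkhoffAverage_koopman (hf : MeasurePreserving f μ μ) (v : Lp ℝ 2 μ) :
    Tendsto (birkhoffAverage ℝ (koopman hf) id · v) atTop (𝓝 (invariantProjection hf v)) := by
  rw [invariantProjection, Submodule.starProjection_apply]
  exact (koopman (E := ℝ) (p := 2) hf).tendsto_birkhoffAverage_orthogonalProjection (𝕜 := ℝ)
    (norm_koopman_le hf) v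

theorem invariantProjection_toLp_of_comp_ae_eq (hf : MeasurePreserving f μ μ) {φ : X → ℝ}
    (hφ : MemLp φ 2 μ) (hinv : φ ∘ f =ᵐ[μ] φ) :
    invariantProjection hf (hφ.toLp φ) = hφ.toLp φ :=
  Submodule.starProjection_eq_self_iff.2 <|
    MemLp.toLp_congr (hφ.comp_measurePreserving hf) hφ hinv

theorem aeSaturated_Wss_invariantProjection [MetricSpace X] (hf : MeasurePreserving f μ μ)
    {ψ : X → ℝ} (hψu : UniformContinuous ψ) (hψ : MemLp ψ 2 μ) :
    AESaturated μ (Wss f) (invariantProjection hf (hψ.toLp ψ)) :=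
  AESaturated.of_tendstoInMeasure_of_tendsto_dist
    ((tendstoInMeasure_of_tendsto_Lp (tendsto_birkhoffAverage_koopman hf _)).congr_left
      (coeFn_birkhoffAverage_koopman_toLp hf hψ))
    ⟨univ, univ_mem, fun _ _ _ _ hxy => tendsto_dist_birkhoffAverage_of_mem_Wss hψu hxy⟩

theorem aeSaturated_Wss_of_comp_ae_eq [MetricSpace X] [BorelSpace X] [IsFiniteMeasure μ]
    (hf : MeasurePreserving f μ μ) {φ : X → ℝ} (hφ : MemLp φ 2 μ) (hinv : φ ∘ f =ᵐ[μ] φ) :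
    AESaturated μ (Wss f) φ := by
  obtain ⟨ψ, hψ, hψu, hψφ⟩ := hφ.exists_lipschitzWith_seq_tendsto_toLp ENNReal.ofNat_ne_top
  have hPψ := ((invariantProjection hf).continuous.tendsto _).comp hψφ
  rw [invariantProjection_toLp_of_comp_ae_eq hf hφ hinv] at hPψ
  exact AESaturated.of_tendstoInMeasure
    ((tendstoInMeasure_of_tendsto_Lp hPψ).congr_right hφ.coeFn_toLp)
    fun k => aeSaturated_Wss_invariantProjection hf (hψu k).choose_spec.uniformContinuous (hψ k)

end Hopf

theorem hopf_argument_two_sided_general {X : Type*} [MetricSpace X] [MeasurableSpace X] [BorelSpace X]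
    (μ : Measure X) [IsProbabilityMeasure μ]
    (f finv : X → X) (hf : MeasurePreserving f μ μ) (hfinv : MeasurePreserving finv μ μ)
    (hri : Function.RightInverse finv f)
    (φ : X → ℝ) (hφ2 : MemLp φ 2 μ)
    (hinvariant : φ ∘ f =ᵐ[μ] φ) :
    Saturated μ (Wss f) φ ∧ Saturated μ (Wss finv) φ := by
  have hinv' : φ ∘ finv =ᵐ[μ] φ := by
    simpa [Function.comp_assoc, hri.comp_eq_id] using
      (hfinv.quasiMeasurePreserving.ae_eq_comp hinvariant).symm
  exact ⟨(aeSaturated_Wss_of_comp_ae_eq hf hφ2 hinvariant).saturated,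
    (aeSaturated_Wss_of_comp_ae_eq hfinv hφ2 hinv').saturated⟩

/-- For an invertible measure-preserving map, any `f`-invariant `φ ∈ L²(μ)` is both
`W^ss`- and `W^su`-saturated (the unstable set being the stable set of the inverse). -/
theorem hopf_argument_two_sided {X : Type*} [MetricSpace X] [MeasurableSpace X] [BorelSpace X]
    (μ : Measure X) [IsProbabilityMeasure μ]
    (f finv : X → X) (hf : MeasurePreserving f μ μ) (hfinv : MeasurePreserving finv μ μ)
    (hli : Function.LeftInverse finv f) (hri : Function.RightInverse finv f)
    (φ : X → ℝ) (hφm : Measurable φ) (hφ2 : MemLp φ 2 μ)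
    (hinvariant : φ ∘ f =ᵐ[μ] φ) :
    Saturated μ (Wss f) φ ∧ Saturated μ (Wss finv) φ :=
  hopf_argument_two_sided_general μ f finv hf hfinv hri φ hφ2 hinvariant
end

section
/- Let (X, d) be a metric space with a Borel probability measure μ, and let T_n : X → X (n ∈ ℕ) be Borel measurable maps such that T_n(x) → x for μ-a.e. x, the pushforward measures (T_n)_*μ are absolutely continuous with respect to μ, and the Radon–Nikodym derivatives g_n = d((T_n)_*μ)/dμ are uniformly integrable (for every ε > 0 there is M such that sup_n ∫_{{g_n > M}} g_n dμ < ε). Then for every bounded measurable φ : X → ℝ one has ∫ |φ∘T_n − φ| dμ → 0 as n → ∞. -/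
/-!
Approximate `φ` in `L¹(μ)` by a continuous `ψ` with the same bound `C`. Then
`∫ |φ ∘ Tₙ - φ| ≤ ∫ |φ - ψ| ∘ Tₙ + ∫ |ψ ∘ Tₙ - ψ| + ∫ |φ - ψ|`. The middle term tends to `0` by
dominated convergence, since `ψ` is continuous and `Tₙ → id` a.e. The first term is
`∫ gₙ |φ - ψ| dμ`, and uniform integrability of the densities `gₙ` makes it small uniformly in
`n` as soon as `∫ |φ - ψ| dμ` is small: split according to whether `gₙ ≤ M` or `gₙ > M`, and use
`|φ - ψ| ≤ 2C` on the second part.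
-/

open MeasureTheory Filter Topology Set

lemma abs_sub_le_two_mul_of_abs_le {a b C : ℝ} (ha : |a| ≤ C) (hb : |b| ≤ C) :
    |a - b| ≤ 2 * C := by
  linarith [abs_sub a b]

section

variable {X : Type*} [MeasurableSpace X]

lemma integrable_of_abs_le {μ : Measure X} [IsFiniteMeasure μ] {f : X → ℝ} (hf : Measurable f)
    {C : ℝ} (hfC : ∀ x, |f x| ≤ C) : Integrable f μ :=
  .of_bound hf.aestronglyMeasurable C (ae_of_all _ hfC)

lemma integral_abs_comp_sub_le {μ : Measure X} [IsFiniteMeasure μ] {T : X → X}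
    (hT : Measurable T) {φ ψ : X → ℝ} (hφ : Measurable φ) (hψ : Measurable ψ)
    {C D : ℝ} (hφC : ∀ x, |φ x| ≤ C) (hψD : ∀ x, |ψ x| ≤ D) :
    ∫ x, |φ (T x) - φ x| ∂μ ≤
      ∫ x, |φ (T x) - ψ (T x)| ∂μ + ∫ x, |ψ (T x) - ψ x| ∂μ + ∫ x, |φ x - ψ x| ∂μ := by
  have iφ : Integrable φ μ := integrable_of_abs_le hφ hφC
  have iψ : Integrable ψ μ := integrable_of_abs_le hψ hψD
  have iφT : Integrable (fun x => φ (T x)) μ := integrable_of_abs_le (hφ.comp hT) (hφC <| T ·)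
  have iψT : Integrable (fun x => ψ (T x)) μ := integrable_of_abs_le (hψ.comp hT) (hψD <| T ·)
  have i₁ : Integrable (fun x => |φ (T x) - ψ (T x)|) μ := (iφT.sub iψT).abs
  have i₂ : Integrable (fun x => |ψ (T x) - ψ x|) μ := (iψT.sub iψ).abs
  have i₃ : Integrable (fun x => |φ x - ψ x|) μ := (iφ.sub iψ).abs
  have i₁₂ : Integrable (fun x => |φ (T x) - ψ (T x)| + |ψ (T x) - ψ x|) μ := i₁.add i₂
  rw [← integral_add i₁ i₂, ← integral_add i₁₂ i₃]
  refine integral_mono (iφT.sub iφ).abs (i₁₂.add i₃) fun x => ?_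
  linarith [abs_sub_le (φ (T x)) (ψ (T x)) (ψ x), abs_sub_le (φ (T x)) (ψ x) (φ x),
    abs_sub_comm (ψ x) (φ x)]

lemma integral_le_mul_integral_add_mul_setIntegral_rnDeriv {μ ν : Measure X} [IsFiniteMeasure μ]
    [IsFiniteMeasure ν] (hνμ : ν ≪ μ) {h : X → ℝ} (hm : Measurable h) (h0 : ∀ x, 0 ≤ h x)
    {B : ℝ} (hB : ∀ x, h x ≤ B) {M : ℝ} (hM : 0 ≤ M) :
    ∫ x, h x ∂ν ≤ M * ∫ x, h x ∂μ +
      B * ∫ x in {x | M < (ν.rnDeriv μ x).toReal}, (ν.rnDeriv μ x).toReal ∂μ := by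
  set g : X → ℝ := fun x => (ν.rnDeriv μ x).toReal
  set s := {x | M < g x}
  have hs : MeasurableSet s :=
    measurableSet_lt measurable_const (Measure.measurable_rnDeriv ν μ).ennreal_toReal
  have habs : ∀ x, |h x| ≤ B := fun x => by rw [abs_of_nonneg (h0 x)]; exact hB x
  have hμ : Integrable h μ := integrable_of_abs_le hm habs
  have hgh : Integrable (fun x => g x * h x) μ :=
    (integrable_toReal_rnDeriv_mul_iff hνμ).2 (integrable_of_abs_le hm habs)
  have hg : Integrable g μ := Measure.integrable_toReal_rnDeriv
  calc ∫ x, h x ∂ν = ∫ x, g x * h x ∂μ := (integral_toReal_rnDeriv_mul hνμ).symm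
    _ = ∫ x in s, g x * h x ∂μ + ∫ x in sᶜ, g x * h x ∂μ := (integral_add_compl hs hgh).symm
    _ ≤ ∫ x in s, B * g x ∂μ + ∫ x in sᶜ, M * h x ∂μ := add_le_add
      (setIntegral_mono_on hgh.integrableOn (hg.const_mul B).integrableOn hs fun x _ => by
        rw [mul_comm]; exact mul_le_mul_of_nonneg_right (hB x) ENNReal.toReal_nonneg)
      (setIntegral_mono_on hgh.integrableOn (hμ.const_mul M).integrableOn hs.compl
        fun x hx => mul_le_mul_of_nonneg_right (not_lt.1 hx) (h0 x))
    _ = B * ∫ x in s, g x ∂μ + M * ∫ x in sᶜ, h x ∂μ := by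
      rw [integral_const_mul, integral_const_mul]
    _ ≤ B * ∫ x in s, g x ∂μ + M * ∫ x, h x ∂μ := add_le_add_right
      (mul_le_mul_of_nonneg_left (setIntegral_le_integral hμ (ae_of_all _ h0)) hM) _
    _ = _ := add_comm _ _

lemma exists_pos_forall_integral_le_of_uniformIntegrable_rnDeriv {ι : Type*} {μ : Measure X}
    [IsFiniteMeasure μ] {ν : ι → Measure X} [∀ i, IsFiniteMeasure (ν i)] (hac : ∀ i, ν i ≪ μ)
    (hui : ∀ ε : ℝ, 0 < ε → ∃ M : ℝ, ∀ i,
      ∫ x in {x | M < ((ν i).rnDeriv μ x).toReal}, ((ν i).rnDeriv μ x).toReal ∂μ < ε)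
    {B ε : ℝ} (hB : 0 ≤ B) (hε : 0 < ε) :
    ∃ δ > 0, ∀ i, ∀ h : X → ℝ, Measurable h → (∀ x, 0 ≤ h x) → (∀ x, h x ≤ B) →
      ∫ x, h x ∂μ ≤ δ → ∫ x, h x ∂(ν i) ≤ ε := by
  obtain ⟨M, hM⟩ := hui (ε / (2 * (B + 1))) (by positivity)
  set M' := max M 0
  refine ⟨ε / (2 * (M' + 1)), by positivity, fun i h hm h0 hB' hδ => ?_⟩
  have htail : ∫ x in {x | M' < ((ν i).rnDeriv μ x).toReal}, ((ν i).rnDeriv μ x).toReal ∂μ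
      ≤ ε / (2 * (B + 1)) :=
    (setIntegral_mono_set Measure.integrable_toReal_rnDeriv.integrableOn
      (ae_of_all _ fun _ => ENNReal.toReal_nonneg)
      (ae_of_all _ fun _ hx => (le_max_left M 0).trans_lt hx)).trans (hM i).le
  have hM'δ : M' * (ε / (2 * (M' + 1))) ≤ ε / 2 := by
    rw [mul_div_assoc', div_le_div_iff₀ (by positivity) two_pos]
    nlinarith [le_max_right M 0]
  have hBη : B * (ε / (2 * (B + 1))) ≤ ε / 2 := by
    rw [mul_div_assoc', div_le_div_iff₀ (by positivity) two_pos]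
    nlinarith
  calc ∫ x, h x ∂(ν i)
      ≤ M' * ∫ x, h x ∂μ +
          B * ∫ x in {x | M' < ((ν i).rnDeriv μ x).toReal}, ((ν i).rnDeriv μ x).toReal ∂μ :=
        integral_le_mul_integral_add_mul_setIntegral_rnDeriv (hac i) hm h0 hB' (le_max_right M 0)
    _ ≤ M' * (ε / (2 * (M' + 1))) + B * (ε / (2 * (B + 1))) := by gcongr
    _ ≤ ε := by linarith

end

lemma exists_continuous_abs_le_integral_abs_sub_le {X : Type*} [TopologicalSpace X] [NormalSpace X]
    [MeasurableSpace X] [BorelSpace X] {μ : Measure X} [IsFiniteMeasure μ] [μ.WeaklyRegular]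
    {φ : X → ℝ} (hφ : Measurable φ) {C : ℝ} (hC : 0 ≤ C) (hφC : ∀ x, |φ x| ≤ C) {δ : ℝ}
    (hδ : 0 < δ) :
    ∃ ψ : X → ℝ, Continuous ψ ∧ (∀ x, |ψ x| ≤ C) ∧ ∫ x, |φ x - ψ x| ∂μ ≤ δ := by
  have hφint : Integrable φ μ := integrable_of_abs_le hφ hφC
  obtain ⟨ψ₀, hψ₀, hψ₀int⟩ := hφint.exists_boundedContinuous_integral_sub_le hδ
  have hC' : -C ≤ C := by linarith
  -- Clamping to `[-C, C]` is `1`-Lipschitz and fixes `φ`, so it does not increase `|φ - ψ₀|`.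
  set clamp : ℝ → ℝ := fun t => projIcc (-C) C hC' t
  have hclampφ : ∀ x, clamp (φ x) = φ x := fun x => by
    simp only [clamp, projIcc_of_mem hC' (abs_le.1 (hφC x))]
  have hclampC : ∀ t, |clamp t| ≤ C := fun t => abs_le.2 (projIcc (-C) C hC' t).2
  refine ⟨fun x => clamp (ψ₀ x), by fun_prop, fun x => hclampC (ψ₀ x), ?_⟩
  refine (integral_mono ?_ (hφint.sub hψ₀int).norm fun x => ?_).trans hψ₀
  · exact (hφint.sub
      (integrable_of_abs_le (by fun_prop) fun x => hclampC (ψ₀ x))).abs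
  · calc |φ x - clamp (ψ₀ x)| = |clamp (φ x) - clamp (ψ₀ x)| := by rw [hclampφ]
      _ ≤ |φ x - ψ₀ x| := abs_projIcc_sub_projIcc hC'
      _ = ‖φ x - ψ₀ x‖ := (Real.norm_eq_abs _).symm

lemma tendsto_integral_abs_comp_sub_of_continuous {X ι : Type*} [TopologicalSpace X]
    [MeasurableSpace X] [OpensMeasurableSpace X] {μ : Measure X} [IsFiniteMeasure μ]
    {l : Filter ι} [l.IsCountablyGenerated] {T : ι → X → X} (hT : ∀ i, Measurable (T i))
    (hTx : ∀ᵐ x ∂μ, Tendsto (fun i => T i x) l (𝓝 x)) {ψ : X → ℝ} (hψ : Continuous ψ) {C : ℝ}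
    (hψC : ∀ x, |ψ x| ≤ C) :
    Tendsto (fun i => ∫ x, |ψ (T i x) - ψ x| ∂μ) l (𝓝 0) := by
  have hψm := hψ.measurable
  simpa using tendsto_integral_filter_of_dominated_convergence
    (F := fun i x => |ψ (T i x) - ψ x|) (f := fun _ => 0) (fun _ => 2 * C)
    (.of_forall fun i => by fun_prop)
    (.of_forall fun i => ae_of_all _ fun x => by
      simpa using abs_sub_le_two_mul_of_abs_le (hψC (T i x)) (hψC x))
    (integrable_const _)
    (hTx.mono fun x hx => by
      simpa using (((hψ.tendsto x).comp hx).sub_const (ψ x)).abs)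

/-- If `T_n → Id` a.e., the pushforwards `(T_n)_*μ` are absolutely continuous with respect
to `μ`, and the Radon–Nikodym derivatives `g_n = d((T_n)_*μ)/dμ` are uniformly integrable,
then `∫ |φ∘T_n − φ| dμ → 0` for every bounded measurable `φ`. -/
theorem L1_convergence_of_ae_convergence_uniformIntegrable {X : Type*} [MetricSpace X]
    [MeasurableSpace X] [BorelSpace X] (μ : Measure X) [IsProbabilityMeasure μ]
    (T : ℕ → X → X) (hTm : ∀ n, Measurable (T n))
    (hTconv : ∀ᵐ x ∂μ, Tendsto (fun n => T n x) atTop (nhds x))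
    (hac : ∀ n, Measure.map (T n) μ ≪ μ)
    (hui : ∀ ε : ℝ, 0 < ε → ∃ M : ℝ, ∀ n : ℕ,
      ∫ x in {x | M < ((Measure.map (T n) μ).rnDeriv μ x).toReal},
        ((Measure.map (T n) μ).rnDeriv μ x).toReal ∂μ < ε)
    (φ : X → ℝ) (hφm : Measurable φ) (hφb : ∃ C : ℝ, ∀ x, |φ x| ≤ C) :
    Tendsto (fun n : ℕ => ∫ x, |φ (T n x) - φ x| ∂μ) atTop (nhds 0) := by
  obtain ⟨C, hφC⟩ := hφb
  have : Nonempty X := nonempty_of_isProbabilityMeasure μ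
  have hC : 0 ≤ C := (abs_nonneg _).trans (hφC (Classical.arbitrary X))
  refine tendsto_order.2 ⟨fun a ha => .of_forall fun n =>
    ha.trans_le (integral_nonneg fun _ => abs_nonneg _), fun ε hε => ?_⟩
  obtain ⟨δ, hδ, hpush⟩ := exists_pos_forall_integral_le_of_uniformIntegrable_rnDeriv hac hui
    (by linarith : 0 ≤ 2 * C) (by positivity : 0 < ε / 3)
  obtain ⟨ψ, hψ, hψC, hφψ⟩ := exists_continuous_abs_le_integral_abs_sub_le (μ := μ) hφm hC hφC
    (lt_min hδ (by positivity : 0 < ε / 3))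
  have hψT := tendsto_integral_abs_comp_sub_of_continuous hTm hTconv hψ hψC
  filter_upwards [hψT.eventually_lt_const (by positivity : 0 < ε / 3)] with n hn
  have hpushed : ∫ x, |φ (T n x) - ψ (T n x)| ∂μ ≤ ε / 3 := by
    rw [← integral_map (f := fun y => |φ y - ψ y|) (hTm n).aemeasurable (by fun_prop)]
    exact hpush n _ (by fun_prop) (fun _ => abs_nonneg _)
      (fun x => abs_sub_le_two_mul_of_abs_le (hφC x) (hψC x)) (hφψ.trans (min_le_left _ _))
  linarith [integral_abs_comp_sub_le (μ := μ) (hTm n) hφm hψ.measurable hφC hψC,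
    hφψ.trans (min_le_right δ (ε / 3))]
end
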